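/- Let ω, c ∈ ℝ with 4ω > c² and let φ_{ω,c}(x) = [√ω/(4ω−c²) · (cosh(√(4ω−c²)·x) − c/(2√ω))]^{−1/2}. Then ∫_ℝ |φ_{ω,c}(x)|² dx = 8 arctan(√((2√ω + c)/(2√ω − c))). In particular ∫_ℝ |φ_{ω,c}|² dx → 4π as (ω,c) → (1,2) with 4ω > c². -/

import Mathlib

open MeasureTheory Filter Complex Topology
open scoped ENNReal NNReal
open Set

noncomputable section


/-- The explicit subcritical solitary-wave profile `φ_{ω,c}` for `4ω > c²`. -/
def profSub (ω c x : ℝ) : ℝ :=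
  (Real.sqrt ω / (4 * ω - c ^ 2) *
    (Real.cosh (Real.sqrt (4 * ω - c ^ 2) * x) - c / (2 * Real.sqrt ω))) ^ (-(1/2) : ℝ)

lemma tendsto_sdc : Tendsto (fun y : ℝ => Real.sinh y / Real.cosh y) atTop (𝓝 1) := by
  have h : ∀ y : ℝ, Real.sinh y / Real.cosh y
      = (1 - Real.exp (-(2*y))) / (1 + Real.exp (-(2*y))) := by
    intro y
    rw [Real.sinh_eq, Real.cosh_eq]
    have h2 : Real.exp (-(2*y)) = Real.exp (-y) * Real.exp (-y) := by
      rw [← Real.exp_add]; ring_nf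
    have h3 : Real.exp y * Real.exp (-y) = 1 := by rw [← Real.exp_add]; simp
    have d1 : (0:ℝ) < Real.exp y + Real.exp (-y) := by positivity
    have d2 : (0:ℝ) < 1 + Real.exp (-(2*y)) := by positivity
    field_simp
    have h2' : Real.exp (-(y*2)) = Real.exp (-y) * Real.exp (-y) := by rw [mul_comm y 2]; exact h2
    linear_combination 2 * Real.exp y * h2' + 2 * Real.exp (-y) * h3
  have texp : Tendsto (fun y : ℝ => Real.exp (-(2*y))) atTop (𝓝 0) := by
    have : Tendsto (fun y : ℝ => 2*y) atTop atTop := tendsto_id.const_mul_atTop two_pos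
    exact Real.tendsto_exp_neg_atTop_nhds_zero.comp this
  have t1 : Tendsto (fun y : ℝ => 1 - Real.exp (-(2*y))) atTop (𝓝 1) := by
    simpa using tendsto_const_nhds.sub texp
  have t2 : Tendsto (fun y : ℝ => 1 + Real.exp (-(2*y))) atTop (𝓝 1) := by
    simpa using tendsto_const_nhds.add texp
  have := t1.div t2 one_ne_zero
  rw [div_one] at this
  exact (tendsto_congr h).mpr this

lemma mass_eq (ω c : ℝ) (h : 4 * ω > c ^ 2) :
    ∫ x : ℝ, (profSub ω c x) ^ 2
      = 8 * Real.arctan (Real.sqrt ((2 * Real.sqrt ω + c) / (2 * Real.sqrt ω - c))) := by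
  have hω : 0 < ω := by nlinarith [sq_nonneg c]
  set s := Real.sqrt ω with hs_def
  have hs : 0 < s := Real.sqrt_pos.mpr hω
  have hs2 : s ^ 2 = ω := Real.sq_sqrt hω.le
  have hd : 0 < 4 * ω - c ^ 2 := by linarith
  set b := Real.sqrt (4 * ω - c ^ 2) with hb_def
  have hb : 0 < b := Real.sqrt_pos.mpr hd
  have hb2 : b ^ 2 = 4 * ω - c ^ 2 := Real.sq_sqrt hd.le
  have hclt : c < 2 * s := by nlinarith [hs2, hs, sq_nonneg (c - 2*s)]
  have hcgt : -(2 * s) < c := by nlinarith [hs2, hs, sq_nonneg (c + 2*s)]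
  set k := Real.sqrt ((2 * s + c) / (2 * s - c)) with hk_def
  have hknn : 0 ≤ k := Real.sqrt_nonneg _
  have hk2 : k ^ 2 = (2 * s + c) / (2 * s - c) :=
    Real.sq_sqrt (div_nonneg (by linarith) (by linarith))
  have K2 : k ^ 2 * (2 * s - c) = 2 * s + c := by
    rw [hk2, div_mul_cancel₀ _ (by linarith : (2*s-c) ≠ 0)]
  have hkb : k * (2 * s - c) = b := by
    have h1 : (k * (2 * s - c)) ^ 2 = b ^ 2 := by
      calc (k * (2 * s - c)) ^ 2 = k ^ 2 * (2 * s - c) * (2 * s - c) := by ring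
        _ = (2 * s + c) * (2 * s - c) := by rw [K2]
        _ = b ^ 2 := by rw [hb2]; linear_combination 4 * hs2
    have h2 : 0 ≤ k * (2 * s - c) := mul_nonneg hknn (by linarith)
    calc k * (2 * s - c) = Real.sqrt ((k * (2 * s - c)) ^ 2) := (Real.sqrt_sq h2).symm
      _ = Real.sqrt (b ^ 2) := by rw [h1]
      _ = b := Real.sqrt_sq hb.le
  clear_value s b k
  clear hs_def hb_def hk_def
  -- pointwise formula
  set g : ℝ → ℝ := fun y => 2 * b ^ 2 / (2 * s * Real.cosh (b * y) - c) with hg_def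
  have hden : ∀ y : ℝ, 0 < 2 * s * Real.cosh (b * y) - c := by
    intro y
    have := Real.one_le_cosh (b * y)
    nlinarith
  have hpt : ∀ x : ℝ, (profSub ω c x) ^ 2 = g |x| := by
    intro x
    have hcoshabs : Real.cosh (b * |x|) = Real.cosh (b * x) := by
      rw [show b * |x| = |b * x| by rw [abs_mul, abs_of_pos hb], Real.cosh_abs]
    have hsωeq : Real.sqrt ω = s := by
      rw [← hs2, Real.sqrt_sq hs.le]
    have hbeq : Real.sqrt (4 * ω - c ^ 2) = b := by
      rw [← hb2, Real.sqrt_sq hb.le]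
    have h1 : c / (2 * s) < 1 := by
      rw [div_lt_one (by positivity)]; linarith
    have h2 : 0 < Real.cosh (b * x) - c / (2 * s) := by
      have := Real.one_le_cosh (b * x); linarith
    have hA : 0 < s / (4 * ω - c ^ 2) * (Real.cosh (b * x) - c / (2 * s)) := by
      positivity
    rw [profSub, hsωeq, hbeq]
    rw [← Real.rpow_natCast (_ ^ (-(1/2):ℝ)) 2, ← Real.rpow_mul hA.le]
    norm_num
    rw [Real.rpow_neg_one, hg_def]
    simp only [hcoshabs]
    rw [← hb2] at hA ⊢
    rw [eq_div_iff (hden x).ne', inv_mul_eq_div, div_eq_iff (by positivity)]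
    field_simp
  -- antiderivative
  set F : ℝ → ℝ := fun x =>
    4 * Real.arctan (k * (Real.sinh (b * x / 2) / Real.cosh (b * x / 2))) with hF_def
  have hderiv : ∀ x : ℝ, HasDerivAt F (g x) x := by
    intro x
    set u := b * x / 2 with hu_def
    have hcu : Real.cosh u ≠ 0 := (Real.cosh_pos u).ne'
    have hT : HasDerivAt (fun y : ℝ => Real.sinh y / Real.cosh y)
        (1 / Real.cosh u ^ 2) u := by
      have h0 := (Real.hasDerivAt_sinh u).div (Real.hasDerivAt_cosh u) hcu
      refine h0.congr_deriv ?_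
      have := Real.cosh_sq_sub_sinh_sq u
      congr 1
      linear_combination this
    have hu' : HasDerivAt (fun x : ℝ => b * x / 2) (b / 2) x := by
      simpa using ((hasDerivAt_id x).const_mul b).div_const 2
    have hTc : HasDerivAt (fun x : ℝ => Real.sinh (b * x / 2) / Real.cosh (b * x / 2))
        (1 / Real.cosh u ^ 2 * (b / 2)) x := by
      have := hT.comp x hu'
      exact this
    have hTk := hTc.const_mul k
    have harct := (Real.hasDerivAt_arctan
        (k * (Real.sinh u / Real.cosh u))).comp x hTk
    have hfin := harct.const_mul 4
    refine hfin.congr_deriv ?_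
    -- algebraic identity
    set cu := Real.cosh u with hcu_def
    set su := Real.sinh u with hsu_def
    have hcup : 0 < cu := Real.cosh_pos u
    have hsu : su ^ 2 = cu ^ 2 - 1 := by
      have := Real.cosh_sq_sub_sinh_sq u; linarith
    have hcbx : Real.cosh (b * x) = 2 * cu ^ 2 - 1 := by
      rw [show b * x = 2 * u by rw [hu_def]; ring, Real.cosh_two_mul, hsu]
      ring
    clear_value cu su
    have hpos : 0 < cu ^ 2 + k ^ 2 * su ^ 2 := by positivity
    have hdpos : 0 < 2 * s * (2 * cu ^ 2 - 1) - c := by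
      have := hden x; rwa [hcbx] at this
    have e1 : cu ^ 2 + k ^ 2 * su ^ 2 = (2 * s * (2 * cu ^ 2 - 1) - c) / (2 * s - c) := by
      rw [hsu, eq_div_iff (by linarith : (2*s-c) ≠ 0)]
      linear_combination (cu ^ 2 - 1) * K2
    have key : 2 * k * b / (cu ^ 2 + k ^ 2 * su ^ 2)
        = 2 * b ^ 2 / (2 * s * (2 * cu ^ 2 - 1) - c) := by
      rw [e1, div_div_eq_mul_div]
      congr 1
      linear_combination 2 * b * hkb
    have e0 : 4 * (1 / (1 + (k * (su / cu)) ^ 2) * (k * (1 / cu ^ 2 * (b / 2))))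
        = 2 * k * b / (cu ^ 2 + k ^ 2 * su ^ 2) := by
      have hne1 : (1 + (k * (su / cu)) ^ 2) ≠ 0 := by positivity
      field_simp
      ring
    rw [hg_def]
    simp only
    rw [hcbx, ← key, ← e0]
  -- limit at infinity
  have hFtop : Tendsto F atTop (𝓝 (4 * Real.arctan k)) := by
    have hbx : Tendsto (fun x : ℝ => b * x / 2) atTop atTop :=
      (tendsto_id.const_mul_atTop hb).atTop_div_const two_pos
    have h1 : Tendsto (fun x : ℝ => Real.sinh (b * x / 2) / Real.cosh (b * x / 2))
        atTop (𝓝 1) := tendsto_sdc.comp hbx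
    have h2 := ((Real.continuous_arctan.tendsto k).comp
        (by simpa using h1.const_mul k)).const_mul 4
    simpa using h2
  have hnn : ∀ y ∈ Ioi (0:ℝ), 0 ≤ g y := fun y _ => le_of_lt (by
    have := hden y; rw [hg_def]; positivity)
  have hIoi : ∫ y in Ioi (0:ℝ), g y = 4 * Real.arctan k - F 0 :=
    integral_Ioi_of_hasDerivAt_of_nonneg' (fun y _ => hderiv y) hnn hFtop
  have hF0 : F 0 = 0 := by simp [hF_def]
  calc ∫ x : ℝ, (profSub ω c x) ^ 2 = ∫ x : ℝ, g |x| := by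
        congr 1; funext x; exact hpt x
    _ = 2 * ∫ y in Ioi (0:ℝ), g y := integral_comp_abs
    _ = 8 * Real.arctan k := by rw [hIoi, hF0]; ring

lemma sqrtTendsto_atTop' : Tendsto Real.sqrt atTop atTop :=
  tendsto_atTop_atTop_of_monotone (fun _ _ h => Real.sqrt_le_sqrt h)
    (fun b => ⟨b ^ 2, by rw [Real.sqrt_sq_eq_abs]; exact le_abs_self b⟩)

lemma two_sqrt_sub_pos (ω c : ℝ) (h : 4 * ω > c ^ 2) : 0 < 2 * Real.sqrt ω - c := by
  have hω : 0 < ω := by nlinarith [sq_nonneg c]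
  have hs2 : Real.sqrt ω ^ 2 = ω := Real.sq_sqrt hω.le
  have hs : 0 < Real.sqrt ω := Real.sqrt_pos.mpr hω
  nlinarith [sq_nonneg (c - 2 * Real.sqrt ω)]

/-- For `4ω > c²`, the mass of the solitary-wave profile is
`∫ φ_{ω,c}² = 8 arctan √((2√ω + c)/(2√ω − c))`; in particular the mass tends to `4π`
as `(ω,c) → (1,2)` within `{4ω > c²}`. -/
theorem stmt_3 (ω c : ℝ) (h : 4 * ω > c ^ 2) :
    (∫ x : ℝ, (profSub ω c x) ^ 2
      = 8 * Real.arctan (Real.sqrt ((2 * Real.sqrt ω + c) / (2 * Real.sqrt ω - c)))) ∧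
    Tendsto (fun p : ℝ × ℝ => ∫ x : ℝ, (profSub p.1 p.2 x) ^ 2)
      (𝓝[{p : ℝ × ℝ | 4 * p.1 > p.2 ^ 2}] ((1 : ℝ), (2 : ℝ)))
      (𝓝 (4 * Real.pi)) := by
  refine ⟨mass_eq ω c h, ?_⟩
  set S : Set (ℝ × ℝ) := {p : ℝ × ℝ | 4 * p.1 > p.2 ^ 2} with hS_def
  -- the integral agrees with the closed form eventually
  have heq : (fun p : ℝ × ℝ => ∫ x : ℝ, (profSub p.1 p.2 x) ^ 2)
      =ᶠ[(𝓝[S] ((1 : ℝ), (2 : ℝ)))] (fun p : ℝ × ℝ =>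
        8 * Real.arctan (Real.sqrt ((2 * Real.sqrt p.1 + p.2) / (2 * Real.sqrt p.1 - p.2)))) := by
    filter_upwards [eventually_mem_nhdsWithin] with p hp
    exact mass_eq p.1 p.2 hp
  rw [tendsto_congr' heq]
  -- numerator tends to 4
  have hnum : Tendsto (fun p : ℝ × ℝ => 2 * Real.sqrt p.1 + p.2) (𝓝[S] ((1 : ℝ), (2 : ℝ))) (𝓝 4) := by
    have hcont : Continuous fun p : ℝ × ℝ => 2 * Real.sqrt p.1 + p.2 :=
      (continuous_const.mul (Real.continuous_sqrt.comp continuous_fst)).add continuous_snd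
    have := (hcont.tendsto ((1 : ℝ), (2 : ℝ))).mono_left (nhdsWithin_le_nhds (s := S))
    norm_num [Real.sqrt_one] at this
    exact this
  -- denominator tends to 0 from the right
  have hden : Tendsto (fun p : ℝ × ℝ => 2 * Real.sqrt p.1 - p.2) (𝓝[S] ((1 : ℝ), (2 : ℝ))) (𝓝[>] 0) := by
    apply tendsto_nhdsWithin_of_tendsto_nhds_of_eventually_within
    · have hcont : Continuous fun p : ℝ × ℝ => 2 * Real.sqrt p.1 - p.2 :=
        (continuous_const.mul (Real.continuous_sqrt.comp continuous_fst)).sub continuous_snd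
      have := (hcont.tendsto ((1 : ℝ), (2 : ℝ))).mono_left (nhdsWithin_le_nhds (s := S))
      norm_num [Real.sqrt_one] at this
      exact this
    · filter_upwards [eventually_mem_nhdsWithin] with p hp
      exact two_sqrt_sub_pos p.1 p.2 hp
  -- ratio tends to atTop
  have hratio : Tendsto (fun p : ℝ × ℝ =>
      (2 * Real.sqrt p.1 + p.2) / (2 * Real.sqrt p.1 - p.2)) (𝓝[S] ((1 : ℝ), (2 : ℝ))) atTop := by
    have hinv : Tendsto (fun p : ℝ × ℝ => (2 * Real.sqrt p.1 - p.2)⁻¹) (𝓝[S] ((1 : ℝ), (2 : ℝ))) atTop :=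
      tendsto_inv_nhdsGT_zero.comp hden
    have := hnum.pos_mul_atTop (by norm_num : (0:ℝ) < 4) hinv
    simpa [div_eq_mul_inv] using this
  have hsqrt : Tendsto (fun p : ℝ × ℝ =>
      Real.sqrt ((2 * Real.sqrt p.1 + p.2) / (2 * Real.sqrt p.1 - p.2))) (𝓝[S] ((1 : ℝ), (2 : ℝ))) atTop :=
    sqrtTendsto_atTop'.comp hratio
  have harct : Tendsto (fun p : ℝ × ℝ =>
      Real.arctan (Real.sqrt ((2 * Real.sqrt p.1 + p.2) / (2 * Real.sqrt p.1 - p.2)))) (𝓝[S] ((1 : ℝ), (2 : ℝ)))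
      (𝓝 (Real.pi / 2)) :=
    ((Real.tendsto_arctan_atTop.mono_right nhdsWithin_le_nhds).comp hsqrt)
  have h8 := harct.const_mul (8:ℝ)
  convert h8 using 2
  ring
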